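/- Fix U ∈ ℝ. There exist r₀ ≥ 1 and C > 0 such that: for every r ≥ r₀, the complex number s(r·e^{iπ/4}) = 1 + 1/(r·e^{iπ/4}) − U²/(r·e^{iπ/4})³ does not lie in (−∞, 0], and, defining ω_−(k) = (U − k²·√(s(k)))/(1 + 1/k) with the principal branch of the complex square root, for every t ∈ (0, 1] one has ∫_{r₀}^∞ |exp(−i·ω_−(r·e^{iπ/4})·t)| dr ≤ C·t^{−1/2}. -/

import Mathlib

open MeasureTheory

/-- The point `k = r·e^{iπ/4}` on the ray of argument `π/4`. -/
noncomputable def rayPt (r : ℝ) : ℂ := (r : ℂ) * Complex.exp (Complex.I * (Real.pi / 4))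

/-- The radicand `s(k) = 1 + 1/k − U²/k³`. -/
noncomputable def plateRad (U : ℝ) (k : ℂ) : ℂ := 1 + 1 / k - (U : ℂ) ^ 2 / k ^ 3

/-- The dispersion root `ω₋(k) = (U − k²√(s(k)))/(1+1/k)` (principal branch). -/
noncomputable def plateOmegaMC (U : ℝ) (k : ℂ) : ℂ :=
  ((U : ℂ) - k ^ 2 * plateRad U k ^ ((1 : ℂ) / 2)) / (1 + 1 / k)

/-!
On the ray `k = r e^{iπ/4}` one has `k² = i r²`, so it suffices to show `ω₋(k) = -k² + O(r)`.
The principal root `w = √s(k)` has `Re w ≥ 0`, hence `‖w + 1‖ ≥ 1` and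
`‖w - 1‖ ≤ ‖w² - 1‖ = ‖s(k) - 1‖ = O(1/r)`; then `(ω₋(k) + k²)(1 + 1/k) = U - k²(w - 1) + k`
gives `‖ω₋(k) + k²‖ ≤ 8r` for `r ≥ 16 + |U|`. So `Im ω₋ ≤ -r²/2`, the integrand is dominated
by `exp(-t r²/2)`, and the Gaussian integral `√(2π/t)` is the bound.
-/

lemma norm_rayPt {r : ℝ} (hr : 0 ≤ r) : ‖rayPt r‖ = r := by
  simp [rayPt, Complex.norm_exp, abs_of_nonneg hr]

lemma im_rayPt_sq (r : ℝ) : (rayPt r ^ 2).im = r ^ 2 := by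
  have h : (2 : ℂ) * (Complex.I * (Real.pi / 4)) = ((Real.pi / 2 : ℝ) : ℂ) * Complex.I := by
    push_cast; ring
  rw [rayPt, mul_pow, ← Complex.exp_nat_mul, Nat.cast_ofNat, h, Complex.exp_mul_I,
    ← Complex.ofReal_cos, ← Complex.ofReal_sin, Real.cos_pi_div_two, Real.sin_pi_div_two]
  simp [← Complex.ofReal_pow]

namespace Complex

lemma re_cpow_one_half_nonneg (s : ℂ) : 0 ≤ (s ^ ((1 : ℂ) / 2)).re := by
  rcases eq_or_ne s 0 with rfl | hs
  · simp
  rw [cpow_def_of_ne_zero hs, exp_re]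
  have him : (log s * ((1 : ℂ) / 2)).im = s.arg / 2 := by
    simp [mul_im, log_im, div_eq_mul_inv]
  rw [him]
  have := Real.cos_nonneg_of_mem_Icc (x := s.arg / 2)
    ⟨by linarith [neg_pi_lt_arg s], by linarith [arg_le_pi s]⟩
  positivity

lemma cpow_one_half_sq (s : ℂ) : (s ^ ((1 : ℂ) / 2)) ^ 2 = s := by
  rw [one_div]; exact cpow_ofNat_inv_pow s 2

lemma norm_sub_one_le_norm_sq_sub_one {w : ℂ} (hw : 0 ≤ w.re) : ‖w - 1‖ ≤ ‖w ^ 2 - 1‖ := by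
  have h1 : 1 ≤ ‖w + 1‖ := by
    have := re_le_norm (w + 1); simp only [add_re, one_re] at this; linarith
  calc ‖w - 1‖ ≤ ‖w - 1‖ * ‖w + 1‖ := le_mul_of_one_le_right (norm_nonneg _) h1
    _ = ‖w ^ 2 - 1‖ := by rw [← norm_mul]; ring_nf

end Complex

section Dispersion

variable {U : ℝ} {k : ℂ}

lemma norm_plateRad_sub_one_le (hU : |U| ≤ ‖k‖) : ‖plateRad U k - 1‖ ≤ 2 / ‖k‖ := by
  rcases eq_or_ne k 0 with rfl | hk
  · simp [plateRad]
  have hk' : 0 < ‖k‖ := norm_pos_iff.mpr hk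
  calc ‖plateRad U k - 1‖ = ‖1 / k - (U : ℂ) ^ 2 / k ^ 3‖ := by rw [plateRad]; ring_nf
    _ ≤ 1 / ‖k‖ + U ^ 2 / ‖k‖ ^ 3 := by
        refine (norm_sub_le _ _).trans_eq ?_
        simp [sq_abs]
    _ ≤ 1 / ‖k‖ + ‖k‖ ^ 2 / ‖k‖ ^ 3 := by
        have hU2 : U ^ 2 ≤ ‖k‖ ^ 2 := sq_abs U ▸ pow_le_pow_left₀ (abs_nonneg U) hU 2
        gcongr _ + ?_ / _
    _ = 2 / ‖k‖ := by field_simp; ring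

lemma half_le_re_plateRad (hU : |U| ≤ ‖k‖) (hk : 4 ≤ ‖k‖) : 1 / 2 ≤ (plateRad U k).re := by
  have h := (Complex.abs_re_le_norm _).trans (norm_plateRad_sub_one_le hU)
  have : 2 / ‖k‖ ≤ 1 / 2 := by rw [div_le_iff₀ (by linarith)]; linarith
  rw [Complex.sub_re, Complex.one_re, abs_le] at h
  linarith

lemma norm_plateOmegaMC_add_sq_le (hU : |U| ≤ ‖k‖) (hk : 2 ≤ ‖k‖) :
    ‖plateOmegaMC U k + k ^ 2‖ ≤ 8 * ‖k‖ := by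
  have hk0 : k ≠ 0 := norm_pos_iff.mp (by linarith)
  set w := plateRad U k ^ ((1 : ℂ) / 2)
  set d : ℂ := 1 + 1 / k
  have hw : ‖w - 1‖ ≤ 2 / ‖k‖ :=
    (Complex.norm_sub_one_le_norm_sq_sub_one (Complex.re_cpow_one_half_nonneg _)).trans
      (by rw [Complex.cpow_one_half_sq]; exact norm_plateRad_sub_one_le hU)
  have hd : 1 / 2 ≤ ‖d‖ := by
    have h := norm_sub_norm_le (1 : ℂ) (-(1 / k))
    have : 1 / ‖k‖ ≤ 1 / 2 := by gcongr
    simp only [norm_one, norm_neg, norm_div, sub_neg_eq_add] at h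
    linarith
  have hd0 : d ≠ 0 := norm_pos_iff.mp (by linarith)
  have hnum : ‖(U : ℂ) - k ^ 2 * (w - 1) + k‖ ≤ 4 * ‖k‖ := by
    calc _ ≤ ‖(U : ℂ)‖ + ‖k‖ ^ 2 * ‖w - 1‖ + ‖k‖ := by
          refine (norm_add_le _ _).trans (add_le_add_left ((norm_sub_le _ _).trans_eq ?_) _)
          rw [norm_mul, norm_pow]
      _ ≤ ‖k‖ + ‖k‖ ^ 2 * (2 / ‖k‖) + ‖k‖ := by
          gcongr; rwa [Complex.norm_real, Real.norm_eq_abs]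
      _ = 4 * ‖k‖ := by field_simp; ring
  have hω : plateOmegaMC U k + k ^ 2 = ((U : ℂ) - k ^ 2 * (w - 1) + k) / d := by
    rw [eq_div_iff hd0, plateOmegaMC, div_add' _ _ _ hd0, div_mul_cancel₀ _ hd0]
    simp only [w, d]
    field_simp
    ring
  rw [hω, norm_div, div_le_iff₀ (by linarith)]
  nlinarith [norm_nonneg k]

end Dispersion

lemma im_plateOmegaMC_rayPt_le {U r : ℝ} (hr : 16 + |U| ≤ r) :
    (plateOmegaMC U (rayPt r)).im ≤ -(r ^ 2 / 2) := by
  have hr0 : 0 ≤ r := by linarith [abs_nonneg U]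
  have h := (Complex.abs_im_le_norm _).trans (norm_plateOmegaMC_add_sq_le (U := U) (k := rayPt r)
    (by rw [norm_rayPt hr0]; linarith) (by rw [norm_rayPt hr0]; linarith [abs_nonneg U]))
  rw [Complex.add_im, im_rayPt_sq, norm_rayPt hr0, abs_le] at h
  nlinarith [mul_le_mul_of_nonneg_left (show 16 ≤ r by linarith [abs_nonneg U]) hr0]

lemma norm_exp_neg_I_mul_mul_ofReal (z : ℂ) (t : ℝ) :
    ‖Complex.exp (-Complex.I * z * t)‖ = Real.exp (t * z.im) := by
  rw [Complex.norm_exp]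
  congr 1
  simp [Complex.mul_re, mul_comm]

lemma integrableOn_and_setIntegral_le_of_le_gaussian {f : ℝ → ℝ} {s : Set ℝ} {c : ℝ}
    (hc : 0 < c) (hs : MeasurableSet s) (hf : AEStronglyMeasurable f (volume.restrict s))
    (hf0 : ∀ x ∈ s, 0 ≤ f x) (hfg : ∀ x ∈ s, f x ≤ Real.exp (-c * x ^ 2)) :
    IntegrableOn f s ∧ ∫ x in s, f x ≤ √(Real.pi / c) := by
  have hg : Integrable (fun x : ℝ => Real.exp (-c * x ^ 2)) := integrable_exp_neg_mul_sq hc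
  have hfi : IntegrableOn f s := by
    refine hg.integrableOn.mono' hf ?_
    filter_upwards [ae_restrict_mem hs] with x hx
    rw [Real.norm_eq_abs, abs_of_nonneg (hf0 x hx)]
    exact hfg x hx
  refine ⟨hfi, ?_⟩
  calc ∫ x in s, f x ≤ ∫ x in s, Real.exp (-c * x ^ 2) :=
        setIntegral_mono_on hfi hg.integrableOn hs hfg
    _ ≤ ∫ x, Real.exp (-c * x ^ 2) :=
        setIntegral_le_integral hg (ae_of_all _ fun x => (Real.exp_pos _).le)
    _ = √(Real.pi / c) := integral_gaussian c

/-- Gaussian decay along the ray `arg k = π/4`: there are `r₀ ≥ 1`, `C > 0`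
such that the radicand avoids `(−∞,0]` on the ray beyond `r₀` and for all `t ∈ (0,1]`,
`∫_{r₀}^∞ |e^{−iω₋(re^{iπ/4})t}| dr ≤ C·t^{−1/2}`. -/
theorem kernel_weak_singularity_estimate (U : ℝ) :
    ∃ r₀ : ℝ, 1 ≤ r₀ ∧ ∃ C : ℝ, 0 < C ∧
      (∀ r : ℝ, r₀ ≤ r →
        ¬ ((plateRad U (rayPt r)).im = 0 ∧ (plateRad U (rayPt r)).re ≤ 0))
      ∧ ∀ t : ℝ, 0 < t → t ≤ 1 →
        IntegrableOn
          (fun r => ‖Complex.exp (-Complex.I * plateOmegaMC U (rayPt r) * (t : ℂ))‖)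
          (Set.Ioi r₀)
        ∧ ∫ r in Set.Ioi r₀,
            ‖Complex.exp (-Complex.I * plateOmegaMC U (rayPt r) * (t : ℂ))‖
          ≤ C * t ^ (-(1 / 2) : ℝ) := by
  have hU := abs_nonneg U
  refine ⟨16 + |U|, by linarith, √(2 * Real.pi), by positivity, ?_, fun t ht _ => ?_⟩
  · intro r hr ⟨_, hre⟩
    have hr0 : 0 ≤ r := by linarith
    linarith [half_le_re_plateRad (U := U) (k := rayPt r) (by rw [norm_rayPt hr0]; linarith)
      (by rw [norm_rayPt hr0]; linarith)]
  have hmeas : Measurable fun r => ‖Complex.exp (-Complex.I * plateOmegaMC U (rayPt r) * t)‖ := by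
    unfold plateOmegaMC plateRad rayPt; fun_prop
  have hC : √(Real.pi / (t / 2)) = √(2 * Real.pi) * t ^ (-(1 / 2) : ℝ) := by
    rw [div_div_eq_mul_div, mul_comm, Real.sqrt_div (by positivity), Real.rpow_neg ht.le,
      ← Real.sqrt_eq_rpow, div_eq_mul_inv]
  rw [← hC]
  refine integrableOn_and_setIntegral_le_of_le_gaussian (by positivity) measurableSet_Ioi
    hmeas.aestronglyMeasurable (fun _ _ => norm_nonneg _) fun r hr => ?_
  rw [norm_exp_neg_I_mul_mul_ofReal, Real.exp_le_exp]
  nlinarith [im_plateOmegaMC_rayPt_le (U := U) (le_of_lt hr)]
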